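/- The operators σ₋(z), σ̄₋(z): B_r → B_r[z^{−1}] commute with taking Schur determinants: for every partition λ ∈ 𝒫_r, σ̄₋(z)Δ_λ(H_r) = Δ_λ(σ̄₋(z)H_r) := det(σ̄₋(z)h_{λ_j−j+i})_{1≤i,j≤r} and σ₋(z)Δ_λ(H_r) = Δ_λ(σ₋(z)H_r) := det(σ₋(z)h_{λ_j−j+i})_{1≤i,j≤r}, where σ₋(z)h_n = Σ_{j=0}^{n} h_{n−j}z^{−j} and σ̄₋(z)h_n = h_n − h_{n−1}z^{−1}. -/

import Mathlib

open ExteriorAlgebra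

/-- The free `ℤ`-module `M₀` with basis indexed by `ℕ`. -/
abbrev M₀ : Type := ℕ →₀ ℤ

/-- The exterior algebra `⋀M₀`. -/
abbrev ExtM₀ : Type := ExteriorAlgebra ℤ M₀

/-- The basis vectors `b i` of `M₀`, seen inside the exterior algebra. -/
noncomputable def b (i : ℕ) : ExtM₀ := ExteriorAlgebra.ι ℤ (Finsupp.single i 1)

/-- A family `D : ℕ → End(⋀M)` is a Hasse–Schmidt family if the series
`𝒟(z) = Σ Dₙ zⁿ` is an algebra homomorphism `⋀M → ⋀M[[z]]`. -/
def IsHSFamily {R : Type*} [CommRing R] {M : Type*} [AddCommGroup M] [Module R M]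
    (D : ℕ → Module.End R (ExteriorAlgebra R M)) : Prop :=
  (∀ (n : ℕ) (x y : ExteriorAlgebra R M),
      D n (x * y) = ∑ p ∈ Finset.HasAntidiagonal.antidiagonal n, (D p.1 x) * (D p.2 y)) ∧
  (∀ n : ℕ, D n (1 : ExteriorAlgebra R M) = if n = 0 then 1 else 0)

/-- `σ₊(z) = Σ σᵢ zⁱ`: the HS derivation with `σᵢ bⱼ = b_{i+j}`. -/
def IsSigmaPlus (D : ℕ → Module.End ℤ ExtM₀) : Prop :=
  IsHSFamily D ∧ ∀ i j : ℕ, D i (b j) = b (i + j)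

/-- `σ̄₊(z) = Σ (-1)ⁱ σ̄ᵢ zⁱ`: the (coefficientwise) HS derivation with
`σ̄₊(z) bⱼ = bⱼ - b_{j+1} z`.  Here `D i` is the coefficient of `zⁱ`, i.e. `D i = (-1)ⁱ σ̄ᵢ`. -/
def IsSigmaBarPlus (D : ℕ → Module.End ℤ ExtM₀) : Prop :=
  IsHSFamily D ∧ (∀ j, D 0 (b j) = b j) ∧ (∀ j, D 1 (b j) = -b (j + 1)) ∧
    (∀ i j, 2 ≤ i → D i (b j) = 0)

/-- `σ₋(z) = Σ σ₋ᵢ z⁻ⁱ`: the HS derivation with `σ₋ᵢ bⱼ = b_{j-i}` (`0` if `i > j`).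
Here `D i` is the coefficient of `z⁻ⁱ`. -/
def IsSigmaMinus (D : ℕ → Module.End ℤ ExtM₀) : Prop :=
  IsHSFamily D ∧ ∀ i j : ℕ, D i (b j) = if i ≤ j then b (j - i) else 0

/-- `σ̄₋(z) = Σ (-1)ⁱ σ̄₋ᵢ z⁻ⁱ`: the HS derivation with `σ̄₋(z) bⱼ = bⱼ - b_{j-1} z⁻¹`
(with `b_{-1} = 0`).  Here `D i` is the coefficient of `z⁻ⁱ`. -/
def IsSigmaBarMinus (D : ℕ → Module.End ℤ ExtM₀) : Prop :=
  IsHSFamily D ∧ (∀ j, D 0 (b j) = b j) ∧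
    (∀ j, D 1 (b j) = -(if 1 ≤ j then b (j - 1) else 0)) ∧
    (∀ i j, 2 ≤ i → D i (b j) = 0)

/-- The basis element `[b]^r_λ = b_{λ_r} ∧ b_{1+λ_{r-1}} ∧ ⋯ ∧ b_{r-1+λ_1}` of `⋀^r M₀`,
for a partition `λ` encoded as an antitone function `lam : Fin r → ℕ` (`lam 0 = λ₁`). -/
noncomputable def bwedge (r : ℕ) (lam : Fin r → ℕ) : ExtM₀ :=
  (List.ofFn fun i : Fin r => b (i.1 + lam i.rev)).prod

/-- The Grassmann cone `𝒢_r ⊆ ⋀^r M₀` of decomposable tensors. -/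
def GrassmannCone (r : ℕ) : Set ExtM₀ :=
  {x | ∃ v : Fin r → M₀, x = (List.ofFn fun i : Fin r => ExteriorAlgebra.ι ℤ (v i)).prod}

/-- The dual basis functional `β_j ∈ M₀*`, `β_j (b_i) = δ_{ij}`. -/
noncomputable def beta (j : ℕ) : Module.Dual ℤ M₀ := Finsupp.lapply j

/-- Contraction `β ⌟ x` of `x ∈ ⋀M₀` against a functional `β ∈ M₀^∨`: the unique odd
derivation of degree `-1` of `⋀M₀` extending `β`. -/
noncomputable def contract (β : Module.Dual ℤ M₀) (x : ExtM₀) : ExtM₀ :=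
  CliffordAlgebra.contractLeft β x

/-- `E_r(z) = 1 - e₁z + ⋯ + (-1)^r e_r z^r ∈ B_r[[z]]`, where `B_r = ℤ[e₁,…,e_r]` is
`MvPolynomial (Fin r) ℤ` (the variable `X i` is `e_{i+1}`). -/
noncomputable def Epow (r : ℕ) : PowerSeries (MvPolynomial (Fin r) ℤ) :=
  1 + ∑ i : Fin r,
    PowerSeries.monomial (i.1 + 1)
      ((-1 : MvPolynomial (Fin r) ℤ) ^ (i.1 + 1) * MvPolynomial.X i)

/-- The coefficient of `z^k` in `E_r(z)`. -/
noncomputable def Ecoeff (r k : ℕ) : MvPolynomial (Fin r) ℤ :=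
  PowerSeries.coeff k (Epow r)

/-- The complete-homogeneous elements `h_n ∈ B_r` (for `n : ℤ`, with `h_n = 0` for `n < 0`),
defined by `Σ_{n≥0} h_n z^n = 1/E_r(z)`. -/
noncomputable def hp (r : ℕ) (n : ℤ) : MvPolynomial (Fin r) ℤ :=
  if 0 ≤ n then PowerSeries.coeff n.toNat ((Epow r).invOfUnit 1) else 0

/-- The Schur determinant `Δ_λ(H_s) = det(h_{λ_j - j + i})_{1≤i,j≤r}` computed with the `h`'s
of `B_s`, for a partition `λ` with (at most) `r` parts, encoded as `lam : Fin r → ℕ`. -/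
noncomputable def schurDet (s r : ℕ) (lam : Fin r → ℕ) : MvPolynomial (Fin s) ℤ :=
  Matrix.det (fun i j : Fin r => hp s ((lam j : ℤ) - (j : ℤ) + (i : ℤ)))

/-- `σ₋(z) h_n = Σ_{j=0}^{n} h_{n-j} z^{-j}`, as a polynomial in the variable `X = z⁻¹` with
coefficients in `B_s` (and `σ₋(z)h_n = 0` for `n < 0`, `σ₋(z)h_0 = 1`). -/
noncomputable def smH (s : ℕ) (n : ℤ) : Polynomial (MvPolynomial (Fin s) ℤ) :=
  if 0 ≤ n then
    ∑ j ∈ Finset.range (n.toNat + 1), Polynomial.C (hp s (n - j)) * Polynomial.X ^ j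
  else 0

/-- `σ̄₋(z) h_n = h_n - h_{n-1} z⁻¹`, as a polynomial in the variable `X = z⁻¹` with
coefficients in `B_s`. -/
noncomputable def sbmH (s : ℕ) (n : ℤ) : Polynomial (MvPolynomial (Fin s) ℤ) :=
  Polynomial.C (hp s n) - Polynomial.C (hp s (n - 1)) * Polynomial.X

set_option maxHeartbeats 1000000
set_option maxRecDepth 8000
open Finset Polynomial

lemma hp_neg (s : ℕ) {n : ℤ} (h : n < 0) : hp s n = 0 := if_neg (by omega)

noncomputable def bz (m : ℤ) : ExtM₀ := if 0 ≤ m then b m.toNat else 0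

noncomputable def wedgeZ (r : ℕ) (γ : Fin r → ℤ) : ExtM₀ :=
  (List.ofFn fun i : Fin r => bz (γ i.rev + ((r - 1 : ℕ) : ℤ))).prod

noncomputable def detZ (r : ℕ) (γ : Fin r → ℤ) : MvPolynomial (Fin r) ℤ :=
  Matrix.det (Matrix.of fun i j : Fin r => hp r (γ j + (i : ℤ)))

lemma det_expand (r : ℕ) (β : Fin r → ℤ) (N : ℕ)
    (c : ℕ → Polynomial (MvPolynomial (Fin r) ℤ))
    (entry : ℤ → Polynomial (MvPolynomial (Fin r) ℤ))
    (hentry : ∀ (j i : Fin r), entry (β j + (i : ℤ)) =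
      ∑ t ∈ Finset.range (N+1), c t * Polynomial.C (hp r (β j - t + (i : ℤ)))) :
    (Matrix.det fun i j : Fin r => entry (β j + (i : ℤ))) =
      ∑ p ∈ Fintype.piFinset (fun _ : Fin r => Finset.range (N+1)),
        (∏ j : Fin r, c (p j)) * Polynomial.C (detZ r (fun j => β j - p j)) := by
  have h1 : (Matrix.det fun i j : Fin r => entry (β j + (i : ℤ))) =
      Matrix.det (Matrix.of fun j i : Fin r => entry (β j + (i : ℤ))) := by
    rw [← Matrix.det_transpose]; rfl
  rw [h1]
  have h2 : (Matrix.of fun j i : Fin r => entry (β j + (i : ℤ))) =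
      fun j => ∑ t ∈ Finset.range (N+1),
        c t • fun i : Fin r => Polynomial.C (hp r (β j - t + (i : ℤ))) := by
    funext j i
    simpa [Finset.sum_apply, smul_eq_mul] using hentry j i
  show Matrix.detRowAlternating _ = _
  rw [h2]
  show (Matrix.detRowAlternating (R := Polynomial (MvPolynomial (Fin r) ℤ))
    (n := Fin r)).toMultilinearMap _ = _
  rw [(Matrix.detRowAlternating (R := Polynomial (MvPolynomial (Fin r) ℤ))
    (n := Fin r)).toMultilinearMap.map_sum_finset
    (fun j t => c t • fun i : Fin r => Polynomial.C (hp r (β j - t + (i : ℤ))))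
    (fun _ => Finset.range (N+1))]
  refine Finset.sum_congr rfl fun p _ => ?_
  rw [MultilinearMap.map_smul_univ]
  have h3 : (Matrix.detRowAlternating (R := Polynomial (MvPolynomial (Fin r) ℤ))).toMultilinearMap
        (fun j => fun i : Fin r => Polynomial.C (hp r (β j - p j + (i : ℤ))))
      = Polynomial.C (detZ r (fun j => β j - p j)) := by
    have := RingHom.map_det (Polynomial.C (R := MvPolynomial (Fin r) ℤ))
      (Matrix.of fun j i : Fin r => hp r (β j - p j + (i : ℤ)))
    rw [show detZ r (fun j => β j - p j) =
      Matrix.det (Matrix.of fun j i : Fin r => hp r (β j - p j + (i : ℤ))) by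
        rw [detZ, ← Matrix.det_transpose]; rfl]
    rw [this]; rfl
  rw [h3, smul_eq_mul]

lemma coeff_det_sbmH (r k : ℕ) (β : Fin r → ℤ) :
    ((Matrix.det fun i j : Fin r => sbmH r (β j + (i : ℤ))).coeff k) =
      ∑ p ∈ (Fintype.piFinset (fun _ : Fin r => Finset.range 2)).filter
          (fun p => ∑ j, p j = k),
        (-1 : ℤ)^k • detZ r (fun j => β j - p j) := by
  rw [det_expand r β 1
    (fun t => Polynomial.C ((-1 : MvPolynomial (Fin r) ℤ)^t) * Polynomial.X^t) (sbmH r) ?_]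
  · rw [Polynomial.finset_sum_coeff, Finset.sum_filter]
    refine Finset.sum_congr rfl fun p _ => ?_
    have h1 : (∏ j : Fin r, Polynomial.C ((-1 : MvPolynomial (Fin r) ℤ)^(p j)) * Polynomial.X^(p j))
        = Polynomial.C ((-1 : MvPolynomial (Fin r) ℤ)^(∑ j, p j)) * Polynomial.X ^ (∑ j, p j) := by
      rw [Finset.prod_mul_distrib, ← map_prod, Finset.prod_pow_eq_pow_sum,
        Finset.prod_pow_eq_pow_sum]
    rw [h1, mul_assoc, mul_comm (Polynomial.X ^ (∑ j, p j)), ← mul_assoc, ← Polynomial.C_mul,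
      Polynomial.coeff_mul_X_pow']
    by_cases h : ∑ j, p j = k
    · rw [if_pos (h ▸ le_rfl), if_pos h, h, Nat.sub_self, Polynomial.coeff_C_zero, zsmul_eq_mul]
      push_cast
      ring
    · rw [if_neg h]
      by_cases hle : ∑ j, p j ≤ k
      · rw [if_pos hle, Polynomial.coeff_C, if_neg (by omega)]
      · rw [if_neg hle]
  · intro j i
    rw [sbmH, Finset.sum_range_succ, Finset.sum_range_one]
    rw [show β j - (0:ℕ) + (i:ℤ) = β j + i by push_cast; ring,
        show β j - (1:ℕ) + (i:ℤ) = β j + i - 1 by push_cast; ring]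
    simp only [pow_zero, pow_one, map_one, map_neg, one_mul]
    ring

lemma coeff_det_smH (r k N : ℕ) (β : Fin r → ℤ) (hN : ∀ j i : Fin r, β j + (i : ℤ) ≤ N) :
    ((Matrix.det fun i j : Fin r => smH r (β j + (i : ℤ))).coeff k) =
      ∑ p ∈ (Fintype.piFinset (fun _ : Fin r => Finset.range (N+1))).filter
          (fun p => ∑ j, p j = k),
        detZ r (fun j => β j - p j) := by
  rw [det_expand r β N (fun t => Polynomial.X^t) (smH r) ?_]
  · rw [Polynomial.finset_sum_coeff, Finset.sum_filter]
    refine Finset.sum_congr rfl fun p _ => ?_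
    rw [Finset.prod_pow_eq_pow_sum, mul_comm, Polynomial.coeff_C_mul_X_pow]
    by_cases h : ∑ j, p j = k
    · rw [if_pos h, if_pos (by omega)]
    · rw [if_neg h, if_neg (by omega)]
  · intro j i
    have hle : β j + (i:ℤ) ≤ N := hN j i
    by_cases h0 : 0 ≤ β j + (i:ℤ)
    · rw [smH, if_pos h0]
      have hsub : (β j + (i:ℤ)).toNat ≤ N := by omega
      rw [Finset.sum_subset (Finset.range_subset_range.2 (by omega : (β j + (i:ℤ)).toNat + 1 ≤ N + 1))]
      · refine Finset.sum_congr rfl fun t _ => ?_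
        rw [mul_comm, show β j - (t:ℤ) + (i:ℤ) = β j + i - t by ring]
      · intro t _ ht
        rw [Finset.mem_range, not_lt] at ht
        rw [hp_neg r (by omega), map_zero, zero_mul]
    · rw [smH, if_neg h0]
      symm
      refine Finset.sum_eq_zero fun t _ => ?_
      rw [hp_neg r (by omega), map_zero, mul_zero]

lemma strictMono_gap {r : ℕ} (g : Fin r → ℕ) (hg : StrictMono g) :
    ∀ i j : Fin r, i ≤ j → g i + (j.1 - i.1) ≤ g j := by
  intro i j hij
  obtain ⟨d, hd⟩ : ∃ d, j.1 = i.1 + d := ⟨j.1 - i.1, by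
    have := (Fin.le_def).1 hij; omega⟩
  induction d generalizing j with
  | zero =>
    have : i = j := Fin.ext (by omega)
    subst this; omega
  | succ d ih =>
    have hj' : i.1 + d < r := by have := j.isLt; omega
    set j' : Fin r := ⟨i.1 + d, hj'⟩ with hj'def
    have h1 : g j' < g j := hg (by rw [Fin.lt_def]; simp [hj'def]; omega)
    have h2 := ih j' (by rw [Fin.le_def]; simp [hj'def]) rfl
    simp only [hj'def] at h1 h2
    omega

lemma val_rev {r : ℕ} (i : Fin r) : (i.rev).1 = r - 1 - i.1 := by
  simp [Fin.rev]; omega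

lemma phi_detZ (r : ℕ) (φ : MvPolynomial (Fin r) ℤ →ₗ[ℤ] ExtM₀)
    (hφ : ∀ mu : Fin r → ℕ, Antitone mu → φ (schurDet r r mu) = bwedge r mu)
    (γ : Fin r → ℤ) : φ (detZ r γ) = wedgeZ r γ := by
  by_cases h0 : ∃ j : Fin r, γ j + ((r - 1 : ℕ) : ℤ) < 0
  · obtain ⟨j, hj⟩ := h0
    have hdet : detZ r γ = 0 := by
      refine Matrix.det_eq_zero_of_column_eq_zero j fun i => ?_
      refine hp_neg r ?_
      have hi := i.isLt
      omega
    have hwedge : wedgeZ r γ = 0 := by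
      refine List.prod_eq_zero ?_
      have : bz (γ (j.rev).rev + ((r-1:ℕ):ℤ)) = 0 := by
        rw [Fin.rev_rev, bz, if_neg (by omega)]
      rw [← this]
      exact List.mem_ofFn.2 ⟨j.rev, rfl⟩
    rw [hdet, hwedge, map_zero]
  · push_neg at h0
    set n : Fin r → ℕ := fun j => (γ j + ((r-1:ℕ):ℤ)).toNat with hn
    have hcast : ∀ j, (n j : ℤ) = γ j + ((r-1:ℕ):ℤ) := fun j => Int.toNat_of_nonneg (h0 j)
    have hwedge : wedgeZ r γ =
        ExteriorAlgebra.ιMulti ℤ r (fun i : Fin r => Finsupp.single (n i.rev) (1:ℤ)) := by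
      rw [ExteriorAlgebra.ιMulti_apply, wedgeZ]
      have : (fun i : Fin r => bz (γ i.rev + ((r-1:ℕ):ℤ))) =
          fun i : Fin r => ExteriorAlgebra.ι ℤ (Finsupp.single (n i.rev) (1:ℤ)) := by
        funext i
        rw [bz, if_pos (h0 i.rev)]
        rfl
      rw [this]
    by_cases hinj : Function.Injective n
    · -- sorted case
      set σ : Equiv.Perm (Fin r) := Tuple.sort n with hσ
      have hmono : Monotone (n ∘ σ) := Tuple.monotone_sort n
      have hsm : StrictMono (n ∘ σ) := hmono.strictMono_of_injective (hinj.comp σ.injective)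
      set τ : Equiv.Perm (Fin r) := Fin.revPerm.trans σ with hτ
      have hτapp : ∀ j, τ j = σ j.rev := fun j => rfl
      have hge : ∀ j : Fin r, r - 1 - j.1 ≤ n (τ j) := by
        intro j
        have h1 := strictMono_gap _ hsm ⟨0, j.pos⟩ j.rev (by rw [Fin.le_def]; simp)
        have h2 := val_rev j
        have h3 : ((⟨0, j.pos⟩ : Fin r) : ℕ) = 0 := rfl
        simp only [Function.comp_apply] at h1
        rw [hτapp]
        omega
      set μ : Fin r → ℕ := fun j => n (τ j) - (r - 1 - j.1) with hμ
      have hμcast : ∀ j, (μ j : ℤ) = γ (τ j) + j.1 := by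
        intro j
        have h1 := hcast (τ j)
        have h2 := hge j
        have h3 := j.isLt
        simp only [hμ]
        omega
      have hμanti : Antitone μ := by
        have hd : Monotone (fun i : Fin r => n (σ i) - i.1) := by
          intro a b hab
          have := strictMono_gap _ hsm a b hab
          simp only [Function.comp_apply] at this
          have := (Fin.le_def).1 hab
          simp only
          omega
        intro a b hab
        have h1 : a.rev.1 = r - 1 - a.1 := val_rev a
        have h2 : b.rev.1 = r - 1 - b.1 := val_rev b
        have h3 : b.rev ≤ a.rev := by rw [Fin.rev_le_rev]; exact hab
        have h4 := hd h3
        simp only [hμ, hτapp]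
        simp only at h4
        omega
      -- determinant side
      have hdet : detZ r γ = ((Equiv.Perm.sign τ : ℤˣ) : ℤ) • schurDet r r μ := by
        have hs : schurDet r r μ =
            ((Matrix.of fun i j : Fin r => hp r (γ j + (i:ℤ))).submatrix id τ).det := by
          rw [schurDet]
          congr 1
          funext i j
          simp only [Matrix.submatrix_apply, Matrix.of_apply, id_eq]
          congr 1
          have := hμcast j
          omega
        rw [hs, Matrix.det_permute', zsmul_eq_mul, ← mul_assoc]
        norm_cast
        rw [Int.units_mul_self]
        simp only [Units.val_one, Int.cast_one, one_mul]
        rfl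
      -- wedge side
      have hbwedge : bwedge r μ =
          ExteriorAlgebra.ιMulti ℤ r
            ((fun i : Fin r => Finsupp.single (n i.rev) (1:ℤ)) ∘
              (Fin.revPerm.trans (τ.trans Fin.revPerm))) := by
        rw [ExteriorAlgebra.ιMulti_apply, bwedge]
        refine congrArg _ (congrArg _ (funext fun i => ?_))
        have h1 : (i : ℕ) + μ i.rev = n (τ i.rev) := by
          have h2 := hge i.rev
          have h3 := val_rev i
          have h4 := val_rev i.rev
          have h5 := i.isLt
          simp only [hμ]
          omega
        simp only [Function.comp_apply, Equiv.trans_apply, Fin.revPerm_apply, Fin.rev_rev, h1]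
        rfl
      have hsign : Equiv.Perm.sign (Fin.revPerm.trans (τ.trans Fin.revPerm)) =
          Equiv.Perm.sign τ := by
        have : Fin.revPerm.trans (τ.trans Fin.revPerm) =
            (Fin.revPerm * τ) * Fin.revPerm := rfl
        rw [this, map_mul, map_mul, mul_comm (Equiv.Perm.sign Fin.revPerm)
          (Equiv.Perm.sign τ), mul_assoc, Int.units_mul_self, mul_one]
      have hperm := AlternatingMap.map_perm (ExteriorAlgebra.ιMulti ℤ r (M := M₀))
        (fun i : Fin r => Finsupp.single (n i.rev) (1:ℤ))
        (Fin.revPerm.trans (τ.trans Fin.revPerm))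
      rw [hsign] at hperm
      rw [hdet, map_smul, hφ μ hμanti, hbwedge, hperm, hwedge]
      rw [Units.smul_def, smul_smul]
      norm_cast
      rw [Int.units_mul_self, Units.val_one, one_smul]
    · -- repeated case
      rw [Function.not_injective_iff] at hinj
      obtain ⟨j, j', hnn, hne⟩ := hinj
      have hdet : detZ r γ = 0 := by
        refine Matrix.det_zero_of_column_eq hne fun i => ?_
        simp only [Matrix.of_apply]
        congr 1
        have h1 := hcast j
        have h2 := hcast j'
        omega
      have hwedge0 : wedgeZ r γ = 0 := by
        rw [hwedge]
        refine AlternatingMap.map_eq_zero_of_eq _ _ (i := j.rev) (j := j'.rev) ?_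
          (fun h => hne (Fin.rev_injective h))
        rw [Fin.rev_rev, Fin.rev_rev, hnn]
      rw [hdet, hwedge0, map_zero]

lemma sum_finAntidiagonal_succ {M : Type*} [AddCommMonoid M] (m n : ℕ)
    (F : (Fin (m+1) → ℕ) → M) :
    ∑ t ∈ Finset.finAntidiagonal (m+1) n, F t =
      ∑ p ∈ Finset.HasAntidiagonal.antidiagonal n, ∑ s ∈ Finset.finAntidiagonal m p.2, F (Fin.cons p.1 s) := by
  rw [← Finset.sum_sigma (Finset.HasAntidiagonal.antidiagonal n) (fun p => Finset.finAntidiagonal m p.2)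
    (fun x => F (Fin.cons x.1.1 x.2))]
  refine Finset.sum_nbij' (fun t => ⟨(t 0, ∑ i : Fin m, Fin.tail t i), Fin.tail t⟩)
    (fun x => Fin.cons x.1.1 x.2) ?_ ?_ ?_ ?_ ?_
  · intro t ht
    rw [Finset.mem_finAntidiagonal] at ht
    rw [Finset.mem_sigma, Finset.HasAntidiagonal.mem_antidiagonal, Finset.mem_finAntidiagonal]
    refine ⟨?_, rfl⟩
    rw [← ht, Fin.sum_univ_succ]
    rfl
  · intro x hx
    rw [Finset.mem_sigma, Finset.HasAntidiagonal.mem_antidiagonal, Finset.mem_finAntidiagonal] at hx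
    rw [Finset.mem_finAntidiagonal, Fin.sum_univ_succ]
    simp only [Fin.cons_zero, Fin.cons_succ]
    rw [hx.2, hx.1]
  · intro t ht
    exact Fin.cons_self_tail t
  · intro x hx
    rw [Finset.mem_sigma, Finset.HasAntidiagonal.mem_antidiagonal, Finset.mem_finAntidiagonal] at hx
    refine Sigma.ext ?_ (by simp [Fin.tail_cons])
    simp only [Fin.cons_zero, Fin.tail_cons]
    rw [hx.2]
  · intro t ht
    rw [Fin.cons_self_tail t]

lemma hs_prod {R : Type*} [CommRing R] {M : Type*} [AddCommGroup M] [Module R M]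
    (D : ℕ → Module.End R (ExteriorAlgebra R M)) (hD : IsHSFamily D) :
    ∀ (m : ℕ) (v : Fin m → ExteriorAlgebra R M) (n : ℕ),
      D n (List.ofFn v).prod =
        ∑ t ∈ Finset.finAntidiagonal m n, (List.ofFn fun i => D (t i) (v i)).prod := by
  intro m
  induction m with
  | zero =>
    intro v n
    rw [List.ofFn_zero, List.prod_nil, hD.2 n]
    rcases Nat.eq_zero_or_pos n with h | h
    · subst h
      have : Finset.finAntidiagonal 0 (0:ℕ) = {(0 : Fin 0 → ℕ)} := by
        ext f
        simp [Subsingleton.elim f 0]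
      rw [this, if_pos rfl, Finset.sum_singleton, List.ofFn_zero, List.prod_nil]
    · have : Finset.finAntidiagonal 0 n = (∅ : Finset (Fin 0 → ℕ)) := by
        ext f
        simp
        omega
      rw [this, if_neg (by omega), Finset.sum_empty]
  | succ m ih =>
    intro v n
    rw [List.ofFn_succ, List.prod_cons, hD.1 n]
    rw [sum_finAntidiagonal_succ]
    refine Finset.sum_congr rfl fun p hp => ?_
    rw [ih (fun i => v i.succ) p.2, Finset.mul_sum]
    refine Finset.sum_congr rfl fun s hs => ?_
    rw [List.ofFn_succ, List.prod_cons]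
    simp only [Fin.cons_zero, Fin.cons_succ]

lemma ofFn_smul_prod {m : ℕ} (c : Fin m → ℤ) (x : Fin m → ExtM₀) :
    (List.ofFn fun i => c i • x i).prod = (∏ i : Fin m, c i) • (List.ofFn x).prod := by
  induction m with
  | zero => simp
  | succ m ih =>
    rw [List.ofFn_succ, List.ofFn_succ (f := x), List.prod_cons, List.prod_cons,
      ih (fun i => c i.succ) (fun i => x i.succ), Fin.prod_univ_succ,
      smul_mul_smul_comm]

lemma sum_rev {M : Type*} [AddCommMonoid M] {r : ℕ} (t : Fin r → M) :
    ∑ j : Fin r, t j.rev = ∑ j : Fin r, t j := by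
  rw [← Equiv.sum_comp Fin.revPerm t]
  exact Finset.sum_congr rfl fun j _ => by rw [Fin.revPerm_apply]

/--
the operators `σ₋(z), σ̄₋(z) : B_r → B_r[z^{-1}]` (transported from `⋀^r M₀`
along the isomorphism `φ_r : Δ_λ(H_r) ↦ [b]^r_λ`) commute with taking Schur determinants:
`σ̄₋(z)Δ_λ(H_r) = det(σ̄₋(z)h_{λ_j-j+i})` and `σ₋(z)Δ_λ(H_r) = det(σ₋(z)h_{λ_j-j+i})`,
where `σ₋(z)h_n = Σ_{j=0}^n h_{n-j}z^{-j}` and `σ̄₋(z)h_n = h_n - h_{n-1}z^{-1}`.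
Coefficientwise (in powers of `z⁻¹`), for all `k : ℕ`:
`σ̄₋ₖ(φ_r Δ_λ(H_r)) = φ_r((det sbmH-matrix).coeff k)` and similarly for `σ₋`.
-/
theorem schubert_derivations_commute_with_schur_determinants
    (r : ℕ) (hr : 1 ≤ r) (lam : Fin r → ℕ) (hlam : Antitone lam)
    (sm : ℕ → Module.End ℤ ExtM₀) (hsm : IsSigmaMinus sm)
    (sbm : ℕ → Module.End ℤ ExtM₀) (hsbm : IsSigmaBarMinus sbm)
    (φ : MvPolynomial (Fin r) ℤ →ₗ[ℤ] ExtM₀)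
    (hφ : ∀ mu : Fin r → ℕ, Antitone mu → φ (schurDet r r mu) = bwedge r mu) :
    ∀ k : ℕ,
      sbm k (φ (schurDet r r lam)) =
        φ ((Matrix.det fun i j : Fin r =>
          sbmH r ((lam j : ℤ) - (j : ℤ) + (i : ℤ))).coeff k) ∧
      sm k (φ (schurDet r r lam)) =
        φ ((Matrix.det fun i j : Fin r =>
          smH r ((lam j : ℤ) - (j : ℤ) + (i : ℤ))).coeff k) := by
  intro k
  have hφlam : φ (schurDet r r lam) = bwedge r lam := hφ lam hlam
  set β : Fin r → ℤ := fun j => (lam j : ℤ) - (j : ℤ) with hβ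
  set mm : Fin r → ℕ := fun i => (i : ℕ) + lam i.rev with hm
  have hbl : bwedge r lam = (List.ofFn fun i => b (mm i)).prod := rfl
  have hmrel : ∀ i : Fin r, (mm i : ℤ) = β i.rev + ((r-1:ℕ):ℤ) := by
    intro i
    have h1 := val_rev i
    have h2 := i.isLt
    simp only [hm, hβ]
    push_cast
    omega
  constructor
  · -- σ̄₋ part
    have hterm : ∀ t ∈ Finset.finAntidiagonal r k, (∀ j, t j ≤ 1) →
        (List.ofFn fun i => (sbm (t i)) (b (mm i))).prod =
          (-1:ℤ)^k • wedgeZ r (fun j => β j - t j.rev) := by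
      intro t ht hle
      have hfac : (fun i : Fin r => (sbm (t i)) (b (mm i))) =
          fun i : Fin r => ((-1:ℤ)^(t i)) • bz ((mm i : ℤ) - t i) := by
        funext i
        rcases Nat.le_one_iff_eq_zero_or_eq_one.1 (hle i) with h | h <;> rw [h]
        · rw [hsbm.2.1 (mm i), pow_zero, one_smul, bz,
            if_pos (by omega : (0:ℤ) ≤ (mm i : ℤ) - (0:ℕ))]
          norm_num
        · rw [hsbm.2.2.1 (mm i), pow_one, neg_smul, one_smul]
          by_cases hmi : 1 ≤ mm i
          · rw [if_pos hmi, bz, if_pos (by push_cast; omega : (0:ℤ) ≤ (mm i : ℤ) - (1:ℕ))]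
            congr 2
            omega
          · rw [if_neg hmi, bz, if_neg (by push_cast; omega)]
      rw [hfac, ofFn_smul_prod, Finset.prod_pow_eq_pow_sum,
        (Finset.mem_finAntidiagonal.1 ht : ∑ j, t j = k)]
      congr 1
      rw [wedgeZ]
      refine congrArg _ (congrArg _ (funext fun i => ?_))
      rw [Fin.rev_rev]
      congr 1
      have h := hmrel i
      omega
    rw [hφlam, hbl, hs_prod sbm hsbm.1 r (fun i => b (mm i)) k]
    rw [show (Matrix.det fun i j : Fin r => sbmH r ((lam j : ℤ) - (j:ℤ) + (i : ℤ))) =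
      (Matrix.det fun i j : Fin r => sbmH r (β j + (i : ℤ))) from rfl]
    rw [coeff_det_sbmH r k β, map_sum]
    rw [← Finset.sum_filter_of_ne (p := fun t => ∀ j, t j ≤ 1)
      (fun t ht hne => by
        by_contra hc
        rw [not_forall] at hc
        obtain ⟨j, hj⟩ := hc
        refine hne (List.prod_eq_zero ?_)
        have h2 : (sbm (t j)) (b (mm j)) = 0 := hsbm.2.2.2 (t j) (mm j) (by omega)
        exact List.mem_ofFn.2 ⟨j, h2⟩)]
    rw [Finset.sum_congr rfl (fun t ht => hterm t (Finset.mem_filter.1 ht).1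
      (Finset.mem_filter.1 ht).2)]
    refine Finset.sum_nbij' (i := fun t => fun j : Fin r => t j.rev)
      (j := fun t => fun j : Fin r => t j.rev) ?_ ?_ ?_ ?_ ?_
    · intro t ht
      obtain ⟨h1, h2⟩ := Finset.mem_filter.1 ht
      rw [Finset.mem_finAntidiagonal] at h1
      have hpi : ∀ j : Fin r, t j.rev ∈ Finset.range 2 := by
        intro j
        rw [Finset.mem_range]
        have := h2 j.rev
        omega
      refine Finset.mem_filter.2 ⟨Fintype.mem_piFinset.2 hpi, ?_⟩
      rw [sum_rev t, h1]
    · intro p hp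
      obtain ⟨h1, h2⟩ := Finset.mem_filter.1 hp
      have hle : ∀ j : Fin r, p j.rev ≤ 1 := by
        intro j
        have := Fintype.mem_piFinset.1 h1 j.rev
        rw [Finset.mem_range] at this
        omega
      refine Finset.mem_filter.2 ⟨Finset.mem_finAntidiagonal.2 ?_, hle⟩
      rw [sum_rev p, h2]
    · intro t _; funext j; simp [Fin.rev_rev]
    · intro t _; funext j; simp [Fin.rev_rev]
    · intro t ht
      rw [LinearMap.map_smul, phi_detZ r φ hφ]
  · -- σ₋ part
    set N : ℕ := k + r + ∑ j : Fin r, lam j with hN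
    have hNbound : ∀ j i : Fin r, β j + (i:ℤ) ≤ (N:ℤ) := by
      intro j i
      have h1 : ((lam j : ℕ) : ℤ) ≤ ((∑ j : Fin r, lam j : ℕ) : ℤ) :=
        Int.ofNat_le.2 (Finset.single_le_sum (fun _ _ => Nat.zero_le _) (Finset.mem_univ j))
      have h2 := i.isLt
      simp only [hβ, hN]
      omega
    have hterm : ∀ t ∈ Finset.finAntidiagonal r k,
        (List.ofFn fun i => (sm (t i)) (b (mm i))).prod =
          wedgeZ r (fun j => β j - t j.rev) := by
      intro t ht
      have hfac : (fun i : Fin r => (sm (t i)) (b (mm i))) =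
          fun i : Fin r => bz ((mm i : ℤ) - t i) := by
        funext i
        rw [hsm.2 (t i) (mm i)]
        by_cases hti : t i ≤ mm i
        · rw [if_pos hti, bz, if_pos (by push_cast; omega)]
          congr 1
          push_cast
          omega
        · rw [if_neg hti, bz, if_neg (by push_cast; omega)]
      rw [hfac, wedgeZ]
      refine congrArg _ (congrArg _ (funext fun i => ?_))
      rw [Fin.rev_rev]
      congr 1
      have h := hmrel i
      omega
    rw [hφlam, hbl, hs_prod sm hsm.1 r (fun i => b (mm i)) k]
    rw [show (Matrix.det fun i j : Fin r => smH r ((lam j : ℤ) - (j:ℤ) + (i : ℤ))) =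
      (Matrix.det fun i j : Fin r => smH r (β j + (i : ℤ))) from rfl]
    rw [coeff_det_smH r k N β hNbound, map_sum]
    rw [Finset.sum_congr rfl hterm]
    refine Finset.sum_nbij' (i := fun t => fun j : Fin r => t j.rev)
      (j := fun t => fun j : Fin r => t j.rev) ?_ ?_ ?_ ?_ ?_
    · intro t ht
      have h1 := Finset.mem_finAntidiagonal.1 ht
      have hpi : ∀ j : Fin r, t j.rev ∈ Finset.range (N+1) := by
        intro j
        rw [Finset.mem_range]
        have h2 : t j.rev ≤ ∑ j : Fin r, t j :=
          Finset.single_le_sum (fun _ _ => Nat.zero_le _) (Finset.mem_univ j.rev)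
        simp only [hN]
        omega
      refine Finset.mem_filter.2 ⟨Fintype.mem_piFinset.2 hpi, ?_⟩
      rw [sum_rev t, h1]
    · intro p hp
      obtain ⟨h1, h2⟩ := Finset.mem_filter.1 hp
      refine Finset.mem_finAntidiagonal.2 ?_
      rw [sum_rev p, h2]
    · intro t _; funext j; simp [Fin.rev_rev]
    · intro t _; funext j; simp [Fin.rev_rev]
    · intro t ht
      rw [phi_detZ r φ hφ]
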